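/- If limsup_{k→∞} k P_k < |C|/(2e), then there exist ε > 0 and K such that for all k ≥ K: |f(z)| ≥ (1+ε) r_{k+1} whenever |z| = (1 − 1/k) r_k, and |f(z)| ≥ (1+ε) r_{k+1} whenever |z − a_k| = r_k/k. -/

import Mathlib

/-!
Fix `k` and `z` with `|z| ≈ r_k` and `|z - a_k| ≥ r_k / k`. For `j < k` the factor `|1 - z / a_j|`
is at least `(1 - 1/k) r_k / r_j - 1 ≥ (1 - 1/k) (1 - 3 r_j / r_k) (1 + r_k / r_j)`, for `j = k` it
is at least `1/k`, and the factors with `j > k` have product at least `1 - 4 r_k / r_(k+1)`.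
Since `r_(k+1) = 2 P_k r_k^N ∏_(j<k) (1 + r_k / r_j)`, this gives
`|f z| / r_(k+1) ≥ |C| (1 - 1/k)^(N+k-1) (1 - 3 s_k) (1 - 4 q_k) / (2 k P_k)` with
`s_k = ∑_(j<k) r_j / r_k` and `q_k = r_k / r_(k+1)`.
The zeros are lacunary: the factors `j = 1, 2` of the recursion give `r_(k+1) ≳ P_k r_k²`, and
`P_k ≥ (3/4)^k`, `r_k ≳ 2^k`, so `q_k → 0`, and then `s_k → 0`. As `(1 - 1/k)^k → 1/e`, the bound
tends to `|C| / (2 e k P_k)`, which eventually stays above `1 + ε`.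
-/

open Filter Finset Topology

theorem Finset.one_sub_sum_le_prod_one_sub {ι R : Type*} [CommRing R] [LinearOrder R]
    [IsStrictOrderedRing R] (s : Finset ι) {x : ι → R} (h0 : ∀ i ∈ s, 0 ≤ x i)
    (h1 : ∀ i ∈ s, x i ≤ 1) : 1 - ∑ i ∈ s, x i ≤ ∏ i ∈ s, (1 - x i) := by
  induction s using Finset.cons_induction with
  | empty => simp
  | cons a s _ ih =>
    rw [prod_cons, sum_cons]
    have hs : 0 ≤ ∑ i ∈ s, x i := sum_nonneg fun i hi => h0 i (mem_cons_of_mem hi)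
    have ha0 := h0 a (mem_cons_self a s)
    have ha1 := h1 a (mem_cons_self a s)
    have ih := ih (fun i hi => h0 i (mem_cons_of_mem hi)) (fun i hi => h1 i (mem_cons_of_mem hi))
    calc 1 - (x a + ∑ i ∈ s, x i) ≤ (1 - x a) * (1 - ∑ i ∈ s, x i) := by nlinarith
      _ ≤ (1 - x a) * ∏ i ∈ s, (1 - x i) := by gcongr

theorem HasProd.prod_mul_le {ι : Type*} {g : ι → ℝ} {p c : ℝ} (hg : HasProd g p)
    (h0 : ∀ j, 0 ≤ g j) (s : Finset ι) (htail : ∀ t, Disjoint t s → c ≤ ∏ j ∈ t, g j) :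
    (∏ j ∈ s, g j) * c ≤ p := by
  classical
  refine ge_of_tendsto hg ?_
  filter_upwards [eventually_ge_atTop s] with u hsu
  rw [← prod_sdiff hsu, mul_comm]
  exact mul_le_mul_of_nonneg_right (htail _ sdiff_disjoint) (prod_nonneg fun j _ => h0 j)

theorem eventually_pow_le_of_tendsto_rpow_one_div {x : ℕ → ℝ} (hx : ∀ᶠ k in atTop, 0 ≤ x k)
    (h : Tendsto (fun k : ℕ => x k ^ ((1 : ℝ) / k)) atTop (𝓝 1)) {b : ℝ} (hb0 : 0 ≤ b)
    (hb : b < 1) : ∀ᶠ k in atTop, b ^ k ≤ x k := by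
  filter_upwards [h.eventually (eventually_ge_nhds hb), hx, eventually_ne_atTop 0]
    with k hbk hxk hk
  calc b ^ k ≤ (x k ^ ((1 : ℝ) / k)) ^ k := pow_le_pow_left₀ hb0 hbk k
    _ = x k := by
      rw [← Real.rpow_natCast, ← Real.rpow_mul hxk, one_div_mul_cancel (by exact_mod_cast hk),
        Real.rpow_one]

theorem exists_pos_one_add_mul_lt_of_limsup_lt {u : ℕ → ℝ} {c : ℝ}
    (h : limsup (fun k => (u k : EReal)) atTop < c) :
    ∃ ε > 0, ∃ L, (1 + ε) * L < c ∧ ∀ᶠ k in atTop, u k < L := by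
  obtain ⟨L, hL, hLc⟩ := EReal.exists_between_coe_real h
  have hcont : Tendsto (fun ε : ℝ => (1 + ε) * L) (𝓝[>] 0) (𝓝 L) := by
    have : Continuous fun ε : ℝ => (1 + ε) * L := by fun_prop
    simpa using (this.tendsto 0).mono_left nhdsWithin_le_nhds
  obtain ⟨ε, hεc, hε⟩ :=
    ((hcont.eventually (eventually_lt_nhds (EReal.coe_lt_coe_iff.1 hLc))).and
      self_mem_nhdsWithin).exists
  exact ⟨ε, hε, L, hεc, (eventually_lt_of_limsup_lt hL).mono fun k hk => EReal.coe_lt_coe_iff.1 hk⟩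

theorem tendsto_one_sub_one_div_add_one_pow (N : ℕ) :
    Tendsto (fun n : ℕ => (1 - 1 / ((n : ℝ) + 1)) ^ (N + n)) atTop (𝓝 (Real.exp 1)⁻¹) := by
  have hρ : Tendsto (fun n : ℕ => 1 - 1 / ((n : ℝ) + 1)) atTop (𝓝 1) := by
    simpa using tendsto_one_div_add_atTop_nhds_zero_nat.const_sub (1 : ℝ)
  have he : Tendsto (fun n : ℕ => (1 + 1 / (n : ℝ)) ^ n) atTop (𝓝 (Real.exp 1)) :=
    Real.tendsto_one_add_div_pow_exp 1
  have := (hρ.pow N).mul (he.inv₀ (Real.exp_pos 1).ne')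
  rw [one_pow, one_mul] at this
  refine this.congr' ?_
  filter_upwards [eventually_ne_atTop 0] with n hn
  have hn : (n : ℝ) ≠ 0 := by exact_mod_cast hn
  rw [pow_add, ← inv_pow]
  congr 2
  field_simp
  ring

section Doubling

variable {R : ℕ → ℝ}

theorem exists_pos_mul_two_pow_le_of_doubling (hR : ∀ j, 0 < R j)
    (h : ∀ᶠ j in atTop, 2 * R j ≤ R (j + 1)) : ∃ c > 0, ∀ᶠ n in atTop, c * 2 ^ n ≤ R n := by
  obtain ⟨m, hm⟩ := eventually_atTop.1 h
  refine ⟨R m / 2 ^ m, div_pos (hR m) (by positivity), eventually_atTop.2 ⟨m, fun n hmn => ?_⟩⟩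
  induction n, hmn using Nat.le_induction with
  | base => rw [div_mul_cancel₀ _ (by positivity)]
  | succ n hmn ih => rw [pow_succ, ← mul_assoc]; linarith [hm n hmn]

variable {m : ℕ}

theorem le_of_doubling (hR : ∀ j, 0 < R j) (h : ∀ j, m ≤ j → 2 * R j ≤ R (j + 1)) {n : ℕ}
    (hmn : m ≤ n) : R m ≤ R n := by
  induction n, hmn using Nat.le_induction with
  | base => rfl
  | succ n hmn ih => linarith [h n hmn, hR n]

theorem sum_inv_le_of_doubling (hR : ∀ j, 0 < R j) (h : ∀ j, m ≤ j → 2 * R j ≤ R (j + 1))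
    {t : Finset ℕ} (ht : ∀ j ∈ t, m ≤ j) : ∑ j ∈ t, (R j)⁻¹ ≤ 2 * (R m)⁻¹ := by
  have hIco : ∀ M, m ≤ M → ∑ j ∈ Ico m M, (R j)⁻¹ + 2 * (R M)⁻¹ ≤ 2 * (R m)⁻¹ := by
    intro M hmM
    induction M, hmM using Nat.le_induction with
    | base => simp
    | succ M hmM ih =>
      have hM : 2 * (R (M + 1))⁻¹ ≤ (R M)⁻¹ := by
        have := inv_anti₀ (mul_pos two_pos (hR M)) (h M hmM)
        rw [mul_inv] at this
        linarith
      rw [sum_Ico_succ_top hmM]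
      linarith
  set M := max m (t.sup id + 1)
  have hsub : t ⊆ Ico m M := fun j hj =>
    mem_Ico.2 ⟨ht j hj, (Nat.lt_succ_of_le (le_sup (f := id) hj)).trans_le (le_max_right _ _)⟩
  calc ∑ j ∈ t, (R j)⁻¹ ≤ ∑ j ∈ Ico m M, (R j)⁻¹ :=
        sum_le_sum_of_subset_of_nonneg hsub fun j _ _ => (inv_pos.2 (hR j)).le
    _ ≤ 2 * (R m)⁻¹ := by linarith [hIco M (le_max_left _ _), inv_pos.2 (hR M)]

end Doubling

theorem tendsto_sum_range_div_of_tendsto_div_succ {R : ℕ → ℝ} (hR : ∀ j, 0 < R j)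
    (hq : Tendsto (fun n => R n / R (n + 1)) atTop (𝓝 0)) :
    Tendsto (fun n => (∑ j ∈ range n, R j) / R n) atTop (𝓝 0) := by
  set s := fun n => (∑ j ∈ range n, R j) / R n with hs
  have hs0 : ∀ n, 0 ≤ s n := fun n => div_nonneg (sum_nonneg fun j _ => (hR j).le) (hR n).le
  have hrec : ∀ n, s (n + 1) = (s n + 1) * (R n / R (n + 1)) := by
    intro n
    simp only [hs, sum_range_succ]
    field_simp [(hR n).ne']
  -- once `q n ≤ 1/2`, the identity `s (n + 1) = (s n + 1) q n` keeps `s` bounded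
  obtain ⟨K, hK⟩ := eventually_atTop.1 (hq.eventually (eventually_le_nhds one_half_pos))
  set B := max (s K) 1
  have hB : ∀ n, K ≤ n → s n ≤ B := by
    intro n hKn
    induction n, hKn using Nat.le_induction with
    | base => exact le_max_left _ _
    | succ n hKn ih =>
      rw [hrec]
      calc (s n + 1) * (R n / R (n + 1)) ≤ (B + 1) * (1 / 2) :=
            mul_le_mul (by linarith) (hK n hKn) (div_nonneg (hR n).le (hR _).le)
              (by linarith [le_max_right (s K) 1])
        _ ≤ B := by linarith [le_max_right (s K) 1]
  rw [← tendsto_add_atTop_iff_nat 1]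
  refine squeeze_zero' (Eventually.of_forall fun n => hs0 _) ?_
    (by simpa using hq.const_mul (B + 1))
  filter_upwards [eventually_ge_atTop K] with n hKn
  rw [hrec]
  exact mul_le_mul_of_nonneg_right (by linarith [hB n hKn]) (div_nonneg (hR n).le (hR _).le)

theorem div_succ_le_of_recursion {N n : ℕ} {p : ℝ} {R : ℕ → ℝ} (hR : ∀ j, 0 < R j)
    (hn : 1 ≤ n) (hRn : 1 ≤ R n) (hp : 0 < p)
    (hrec : R (n + 1) = p * R n ^ N * ∏ j ∈ range (n + 1), (1 + R n / R j)) :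
    R n / R (n + 1) ≤ R 0 * R 1 * (p * R n)⁻¹ := by
  have h0 := div_pos (hR n) (hR 0)
  have h1 := div_pos (hR n) (hR 1)
  -- the factors `j = 0, 1` alone give `R (n + 1) ≥ p * R n ^ 2 / (R 0 * R 1)`
  have hprod : R n / R 0 * (R n / R 1) ≤ ∏ j ∈ range (n + 1), (1 + R n / R j) := by
    calc R n / R 0 * (R n / R 1) ≤ ∏ j ∈ range 2, (1 + R n / R j) := by
          simp only [prod_range_succ, prod_range_zero, one_mul]
          nlinarith
      _ ≤ ∏ j ∈ range (n + 1), (1 + R n / R j) :=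
          prod_le_prod_of_subset_of_one_le (range_subset_range.2 (by omega))
            (fun j _ => by have := div_pos (hR n) (hR j); linarith)
            (fun j _ _ => by have := div_pos (hR n) (hR j); linarith)
  have hlow : p * (R n / R 0 * (R n / R 1)) ≤ R (n + 1) := by
    rw [hrec, mul_assoc]
    refine mul_le_mul_of_nonneg_left (hprod.trans ?_) hp.le
    exact le_mul_of_one_le_left ((mul_pos h0 h1).le.trans hprod) (one_le_pow₀ hRn)
  have := (hR 0).ne'; have := (hR 1).ne'; have := (hR n).ne'; have := hp.ne'
  rw [div_le_iff₀ (hR _)]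
  calc R n = R 0 * R 1 * (p * R n)⁻¹ * (p * (R n / R 0 * (R n / R 1))) := by field_simp
    _ ≤ R 0 * R 1 * (p * R n)⁻¹ * R (n + 1) :=
        mul_le_mul_of_nonneg_left hlow
          (mul_pos (mul_pos (hR 0) (hR 1)) (inv_pos.2 (mul_pos hp (hR n)))).le

theorem tendsto_div_succ_of_recursion {N : ℕ} {P R : ℕ → ℝ} (hP : ∀ᶠ k in atTop, 0 ≤ P k)
    (hPlim : Tendsto (fun k : ℕ => P k ^ ((1 : ℝ) / k)) atTop (𝓝 1)) (hR : ∀ j, 0 < R j)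
    (hdouble : ∀ᶠ j in atTop, 2 * R j ≤ R (j + 1))
    (hrec : ∀ n, R (n + 1) = P (n + 1) * R n ^ N * ∏ j ∈ range (n + 1), (1 + R n / R j)) :
    Tendsto (fun n => R n / R (n + 1)) atTop (𝓝 0) := by
  obtain ⟨c, hc, hgrowth⟩ := exists_pos_mul_two_pow_le_of_doubling hR hdouble
  have hRtop : Tendsto R atTop atTop := tendsto_atTop_mono' _ hgrowth
    ((tendsto_pow_atTop_atTop_of_one_lt one_lt_two).const_mul_atTop hc)
  have hP34 : ∀ᶠ n in atTop, (3 / 4 : ℝ) ^ (n + 1) ≤ P (n + 1) :=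
    (tendsto_add_atTop_nat 1).eventually
      (eventually_pow_le_of_tendsto_rpow_one_div hP hPlim (by norm_num) (by norm_num))
  -- `P (n + 1) ≥ (3/4)^(n+1)` loses less than the doubling `R n ≳ 2^n` gains
  have hPR : Tendsto (fun n => P (n + 1) * R n) atTop atTop := by
    refine tendsto_atTop_mono' _ ?_ ((tendsto_pow_atTop_atTop_of_one_lt
      (by norm_num : (1 : ℝ) < 3 / 2)).const_mul_atTop (by positivity : 0 < 3 / 4 * c))
    filter_upwards [hgrowth, hP34] with n hRn hPn
    calc 3 / 4 * c * (3 / 2) ^ n = (3 / 4) ^ (n + 1) * (c * 2 ^ n) := by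
          rw [show (3 / 2 : ℝ) = 3 / 4 * 2 by norm_num, mul_pow]; ring
      _ ≤ P (n + 1) * R n :=
          mul_le_mul hPn hRn (by positivity) ((pow_pos (by norm_num) _).le.trans hPn)
  refine squeeze_zero' (Eventually.of_forall fun n => div_nonneg (hR n).le (hR _).le) ?_
    (by rw [← mul_zero (R 0 * R 1)]; exact hPR.inv_tendsto_atTop.const_mul _)
  filter_upwards [hRtop.eventually_ge_atTop 1, eventually_ge_atTop 1, hP34] with n hRn hn hPn
  exact div_succ_le_of_recursion hR hn hRn ((pow_pos (by norm_num) _).trans_le hPn) (hrec n)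

section LacunaryProduct

variable {R : ℕ → ℝ} {b : ℕ → ℂ} {z : ℂ}

theorem pow_mul_prod_le_prod_norm_one_sub_div (hR : ∀ j, 0 < R j) (hb : ∀ j, ‖b j‖ = R j)
    {n : ℕ} {ρ : ℝ} (hρ : 1 / 2 ≤ ρ) (hz : ρ * R n ≤ ‖z‖)
    (hs : 3 * ((∑ j ∈ range n, R j) / R n) ≤ 1) :
    ρ ^ n * (1 - 3 * ((∑ j ∈ range n, R j) / R n)) * ∏ j ∈ range n, (1 + R n / R j) ≤
      ∏ j ∈ range n, ‖1 - z / b j‖ := by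
  have ht0 : ∀ j, 0 ≤ 3 * (R j / R n) := fun j => by have := hR j; have := hR n; positivity
  have ht1 : ∀ j ∈ range n, 3 * (R j / R n) ≤ 1 := fun j hj => by
    refine le_trans ?_ hs
    rw [sum_div]
    gcongr
    exact single_le_sum (fun i _ => div_nonneg (hR i).le (hR n).le) hj
  have hfactor : ∀ j ∈ range n,
      ρ * (1 - 3 * (R j / R n)) * (1 + R n / R j) ≤ ‖1 - z / b j‖ := by
    intro j _
    have hj := hR j
    have hn := hR n
    calc ρ * (1 - 3 * (R j / R n)) * (1 + R n / R j) ≤ ρ * R n / R j - 1 := by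
          rw [div_sub_one hj.ne', le_div_iff₀ hj]
          field_simp
          nlinarith [mul_nonneg (mul_nonneg hn.le hj.le) (by linarith : 0 ≤ 2 * ρ - 1),
            mul_nonneg (by linarith : 0 ≤ ρ) (sq_nonneg (R j))]
      _ ≤ ‖z / b j‖ - ‖(1 : ℂ)‖ := by
          rw [norm_div, hb, norm_one]
          gcongr
      _ ≤ ‖1 - z / b j‖ := by rw [norm_sub_rev 1]; exact norm_sub_norm_le _ _
  calc ρ ^ n * (1 - 3 * ((∑ j ∈ range n, R j) / R n)) * ∏ j ∈ range n, (1 + R n / R j)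
      ≤ ρ ^ n * (∏ j ∈ range n, (1 - 3 * (R j / R n))) * ∏ j ∈ range n, (1 + R n / R j) := by
        have hW : 1 - 3 * ((∑ j ∈ range n, R j) / R n) ≤ ∏ j ∈ range n, (1 - 3 * (R j / R n)) := by
          rw [sum_div, mul_sum]
          exact one_sub_sum_le_prod_one_sub _ (fun j _ => ht0 j) ht1
        exact mul_le_mul_of_nonneg_right (mul_le_mul_of_nonneg_left hW (pow_nonneg (by linarith) _))
          (prod_nonneg fun j _ => by have := div_pos (hR n) (hR j); linarith)
    _ = ∏ j ∈ range n, ρ * (1 - 3 * (R j / R n)) * (1 + R n / R j) := by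
        rw [prod_mul_distrib, prod_mul_distrib, prod_const, card_range]
    _ ≤ ∏ j ∈ range n, ‖1 - z / b j‖ :=
        prod_le_prod (fun j hj => mul_nonneg (mul_nonneg (by linarith) (by linarith [ht1 j hj]))
          (by have := div_pos (hR n) (hR j); linarith)) hfactor

theorem one_sub_le_prod_norm_one_sub_div (hR : ∀ j, 0 < R j) (hb : ∀ j, ‖b j‖ = R j) {n : ℕ}
    (hdouble : ∀ j, n ≤ j → 2 * R j ≤ R (j + 1)) (hz : ‖z‖ ≤ 2 * R n) {t : Finset ℕ}
    (ht : Disjoint t (range (n + 1))) :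
    1 - 4 * (R n / R (n + 1)) ≤ ∏ j ∈ t, ‖1 - z / b j‖ := by
  have hnj : ∀ j ∈ t, n + 1 ≤ j := fun j hj => by simpa using disjoint_left.1 ht hj
  have hdouble' : ∀ j, n + 1 ≤ j → 2 * R j ≤ R (j + 1) := fun j hj => hdouble j (by omega)
  have hx0 : ∀ j, 0 ≤ ‖z‖ / R j := fun j => div_nonneg (norm_nonneg _) (hR j).le
  have hx1 : ∀ j ∈ t, ‖z‖ / R j ≤ 1 := fun j hj => by
    rw [div_le_one (hR j)]
    linarith [hdouble n le_rfl, le_of_doubling hR hdouble' (hnj j hj)]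
  have hsum : ∑ j ∈ t, ‖z‖ / R j ≤ 4 * (R n / R (n + 1)) := by
    calc ∑ j ∈ t, ‖z‖ / R j = ‖z‖ * ∑ j ∈ t, (R j)⁻¹ := by simp only [mul_sum, div_eq_mul_inv]
      _ ≤ 2 * R n * (2 * (R (n + 1))⁻¹) :=
          mul_le_mul hz (sum_inv_le_of_doubling hR hdouble' hnj)
            (sum_nonneg fun j _ => (inv_pos.2 (hR j)).le) (by linarith [hR n])
      _ = 4 * (R n / R (n + 1)) := by ring
  calc 1 - 4 * (R n / R (n + 1)) ≤ 1 - ∑ j ∈ t, ‖z‖ / R j := by linarith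
    _ ≤ ∏ j ∈ t, (1 - ‖z‖ / R j) := one_sub_sum_le_prod_one_sub t (fun j _ => hx0 j) hx1
    _ ≤ ∏ j ∈ t, ‖1 - z / b j‖ := prod_le_prod (fun j hj => by linarith [hx1 j hj]) fun j _ => by
        calc 1 - ‖z‖ / R j = ‖(1 : ℂ)‖ - ‖z / b j‖ := by rw [norm_one, norm_div, hb]
          _ ≤ ‖1 - z / b j‖ := norm_sub_norm_le _ _

theorem le_norm_tprod_one_sub_div (hR : ∀ j, 0 < R j) (hb : ∀ j, ‖b j‖ = R j)
    (hmul : Multipliable fun j => 1 - z / b j) {n : ℕ}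
    (hdouble : ∀ j, n ≤ j → 2 * R j ≤ R (j + 1)) {ρ δ : ℝ} (hρ : 1 / 2 ≤ ρ)
    (hz₁ : ρ * R n ≤ ‖z‖) (hz₂ : ‖z‖ ≤ 2 * R n) (hδ : δ * R n ≤ ‖z - b n‖)
    (hs : 3 * ((∑ j ∈ range n, R j) / R n) ≤ 1) (hq : 4 * (R n / R (n + 1)) ≤ 1) :
    ρ ^ n * (1 - 3 * ((∑ j ∈ range n, R j) / R n)) * (∏ j ∈ range n, (1 + R n / R j)) * δ *
      (1 - 4 * (R n / R (n + 1))) ≤ ‖∏' j, (1 - z / b j)‖ := by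
  have hbn : b n ≠ 0 := norm_pos_iff.1 (hb n ▸ hR n)
  have hδn : δ ≤ ‖1 - z / b n‖ := by
    rw [one_sub_div hbn, norm_div, hb, norm_sub_rev, le_div_iff₀ (hR n)]
    exact hδ
  have hhead0 : 0 ≤ ρ ^ n * (1 - 3 * ((∑ j ∈ range n, R j) / R n)) *
      ∏ j ∈ range n, (1 + R n / R j) :=
    mul_nonneg (mul_nonneg (pow_nonneg (by linarith) _) (by linarith))
      (prod_nonneg fun j _ => by have := div_pos (hR n) (hR j); linarith)
  refine le_trans ?_ (hmul.hasProd.norm.prod_mul_le (fun _ => norm_nonneg _) (range (n + 1))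
    fun t ht => one_sub_le_prod_norm_one_sub_div hR hb hdouble hz₂ ht)
  rw [prod_range_succ]
  refine mul_le_mul_of_nonneg_right ?_ (by linarith)
  exact (mul_le_mul_of_nonneg_left hδn hhead0).trans (mul_le_mul_of_nonneg_right
    (pow_mul_prod_le_prod_norm_one_sub_div hR hb hρ hz₁ hs) (norm_nonneg _))

end LacunaryProduct

theorem mul_le_norm_mul_pow_mul_tprod {R : ℕ → ℝ} {b : ℕ → ℂ} {z C : ℂ} {N n : ℕ}
    {p κ ρ δ : ℝ} (hR : ∀ j, 0 < R j) (hb : ∀ j, ‖b j‖ = R j)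
    (hmul : Multipliable fun j => 1 - z / b j) (hdouble : ∀ j, n ≤ j → 2 * R j ≤ R (j + 1))
    (hρ : 1 / 2 ≤ ρ) (hz₁ : ρ * R n ≤ ‖z‖) (hz₂ : ‖z‖ ≤ 2 * R n) (hδ₀ : 0 ≤ δ)
    (hδ : δ * R n ≤ ‖z - b n‖) (hs : 3 * ((∑ j ∈ range n, R j) / R n) ≤ 1)
    (hq : 4 * (R n / R (n + 1)) ≤ 1)
    (hrec : R (n + 1) = p * R n ^ N * ∏ j ∈ range (n + 1), (1 + R n / R j))
    (hκ : 2 * κ * p ≤ ‖C‖ * ρ ^ (N + n) * (1 - 3 * ((∑ j ∈ range n, R j) / R n)) * δ *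
      (1 - 4 * (R n / R (n + 1)))) :
    κ * R (n + 1) ≤ ‖C * z ^ N * ∏' j, (1 - z / b j)‖ := by
  set s := (∑ j ∈ range n, R j) / R n
  set q := R n / R (n + 1)
  set Q := ∏ j ∈ range n, (1 + R n / R j)
  have hQ : 0 ≤ Q := prod_nonneg fun j _ => by have := div_pos (hR n) (hR j); linarith
  have hX : 0 ≤ ρ ^ n * (1 - 3 * s) * Q * δ * (1 - 4 * q) :=
    mul_nonneg (mul_nonneg (mul_nonneg (mul_nonneg (pow_nonneg (by linarith) _) (by linarith))
      hQ) hδ₀) (by linarith)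
  calc κ * R (n + 1) = 2 * κ * p * (R n ^ N * Q) := by
        rw [hrec, prod_range_succ, div_self (hR n).ne']; ring
    _ ≤ ‖C‖ * ρ ^ (N + n) * (1 - 3 * s) * δ * (1 - 4 * q) * (R n ^ N * Q) :=
        mul_le_mul_of_nonneg_right hκ (mul_nonneg (pow_nonneg (hR n).le _) hQ)
    _ = ‖C‖ * (ρ * R n) ^ N * (ρ ^ n * (1 - 3 * s) * Q * δ * (1 - 4 * q)) := by ring
    _ ≤ ‖C‖ * ‖z‖ ^ N * ‖∏' j, (1 - z / b j)‖ :=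
        mul_le_mul (mul_le_mul_of_nonneg_left (pow_le_pow_left₀
          (mul_nonneg (by linarith) (hR n).le) hz₁ N) (norm_nonneg C))
          (le_norm_tprod_one_sub_div hR hb hmul hdouble hρ hz₁ hz₂ hδ hs hq) hX (by positivity)
    _ = ‖C * z ^ N * ∏' j, (1 - z / b j)‖ := by rw [norm_mul, norm_mul, norm_pow]

theorem eventually_mul_le_norm_mul_pow_mul_tprod {N : ℕ} {C : ℂ} {P R : ℕ → ℝ} {b : ℕ → ℂ}
    {L κ : ℝ} (hP : ∀ᶠ k in atTop, 0 ≤ P k)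
    (hPlim : Tendsto (fun k : ℕ => P k ^ ((1 : ℝ) / k)) atTop (𝓝 1)) (hR : ∀ j, 0 < R j)
    (hdouble : ∀ᶠ j in atTop, 2 * R j ≤ R (j + 1))
    (hrec : ∀ n, R (n + 1) = P (n + 1) * R n ^ N * ∏ j ∈ range (n + 1), (1 + R n / R j))
    (hb : ∀ j, ‖b j‖ = R j) (hmul : ∀ z, Multipliable fun j => 1 - z / b j)
    (hPL : ∀ᶠ n : ℕ in atTop, ((n : ℝ) + 1) * P (n + 1) < L) (hκ : 0 ≤ κ)
    (hκL : κ * L < ‖C‖ / (2 * Real.exp 1)) :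
    ∀ᶠ n : ℕ in atTop, ∀ z : ℂ, (1 - 1 / ((n : ℝ) + 1)) * R n ≤ ‖z‖ → ‖z‖ ≤ 2 * R n →
      R n / ((n : ℝ) + 1) ≤ ‖z - b n‖ → κ * R (n + 1) ≤ ‖C * z ^ N * ∏' j, (1 - z / b j)‖ := by
  have hq := tendsto_div_succ_of_recursion hP hPlim hR hdouble hrec
  have hs := tendsto_sum_range_div_of_tendsto_div_succ hR hq
  have hc : Tendsto (fun n : ℕ => ‖C‖ * (1 - 1 / ((n : ℝ) + 1)) ^ (N + n) *
      (1 - 3 * ((∑ j ∈ range n, R j) / R n)) * (1 - 4 * (R n / R (n + 1)))) atTop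
      (𝓝 (‖C‖ / Real.exp 1)) := by
    have := (((tendsto_one_sub_one_div_add_one_pow N).const_mul ‖C‖).mul
      ((hs.const_mul 3).const_sub 1)).mul ((hq.const_mul 4).const_sub 1)
    simpa [div_eq_mul_inv] using this
  have hκL' : 2 * κ * L < ‖C‖ / Real.exp 1 := by
    rw [div_mul_eq_div_div_swap, lt_div_iff₀ two_pos] at hκL
    linarith
  obtain ⟨m, hm⟩ := eventually_atTop.1 hdouble
  filter_upwards [eventually_ge_atTop 1, eventually_ge_atTop m,
    hc.eventually (eventually_gt_nhds hκL'),
    hs.eventually (eventually_le_nhds (by norm_num : (0 : ℝ) < 1 / 3)),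
    hq.eventually (eventually_le_nhds (by norm_num : (0 : ℝ) < 1 / 4)), hPL]
    with n hn1 hmn hcn hsn hqn hPn z hz₁ hz₂ hz₃
  have hn : (0 : ℝ) < n + 1 := by positivity
  refine mul_le_norm_mul_pow_mul_tprod (δ := 1 / ((n : ℝ) + 1)) hR hb (hmul z)
    (fun j hj => hm j (hmn.trans hj)) ?_ hz₁ hz₂ (by positivity) (by rwa [one_div_mul_eq_div])
    (by linarith) (by linarith) (hrec n) ?_
  · have : (1 : ℝ) ≤ n := by exact_mod_cast hn1
    rw [le_sub_comm, div_le_iff₀ hn]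
    linarith
  · have hPL' := mul_le_mul_of_nonneg_left hPn.le (by linarith : 0 ≤ 2 * κ)
    rw [mul_assoc _ (1 / _), mul_comm (1 / _), ← mul_assoc, mul_one_div, le_div_iff₀ hn]
    linarith

theorem stmt_11_general (N : ℕ) (C : ℂ)
    (P r : ℕ → ℝ)
    (hP : ∀ k, 1 ≤ k → 0 < P k)
    (hPlim : Tendsto (fun k : ℕ => (P k) ^ ((1 : ℝ) / k)) atTop (nhds 1))
    (hrpos : ∀ k, 1 ≤ k → 0 < r k)
    (hr2 : ∀ᶠ k in atTop, 2 * r k ≤ r (k + 1))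
    (hrec : ∀ k, 1 ≤ k →
      r (k + 1) = P k * (r k) ^ N * ∏ j ∈ Finset.Icc 1 k, (1 + r k / r j))
    (a : ℕ → ℂ) (ha : ∀ k, 1 ≤ k → ‖a k‖ = r k)
    (f : ℂ → ℂ)
    (hmul : ∀ z : ℂ, Multipliable (fun k : ℕ => 1 - z / a (k + 1)))
    (hf : ∀ z : ℂ, f z = C * z ^ N * ∏' k : ℕ, (1 - z / a (k + 1)))
    (hsup : Filter.limsup (fun k : ℕ => (((k : ℝ) * P k : ℝ) : EReal)) atTop <
      ((‖C‖ / (2 * Real.exp 1) : ℝ) : EReal)) :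
    ∃ ε : ℝ, 0 < ε ∧ ∃ K : ℕ, ∀ k, K ≤ k →
      (∀ z : ℂ, ‖z‖ = (1 - 1 / (k : ℝ)) * r k →
        (1 + ε) * r (k + 1) ≤ ‖f z‖) ∧
      (∀ z : ℂ, ‖z - a k‖ = r k / (k : ℝ) →
        (1 + ε) * r (k + 1) ≤ ‖f z‖) := by
  obtain ⟨ε, hε, L, hεL, hPL⟩ := exists_pos_one_add_mul_lt_of_limsup_lt hsup
  -- the zeros are re-indexed from `0` (`R j = r (j + 1)`) and `k = n + 1`
  have hev := eventually_mul_le_norm_mul_pow_mul_tprod (N := N) (C := C) (κ := 1 + ε)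
    (R := fun j => r (j + 1)) (b := fun j => a (j + 1))
    (eventually_atTop.2 ⟨1, fun k hk => (hP k hk).le⟩) hPlim (fun j => hrpos _ (by omega))
    ((tendsto_add_atTop_nat 1).eventually hr2)
    (fun n => by
      rw [hrec (n + 1) (by omega), range_eq_Ico, prod_Ico_add' (fun j => 1 + r (n + 1) / r j),
        zero_add, Ico_add_one_right_eq_Icc])
    (fun j => ha _ (by omega)) hmul
    (((tendsto_add_atTop_nat 1).eventually hPL).mono fun n hn => by exact_mod_cast hn)
    (by linarith) hεL
  obtain ⟨K, hK⟩ := eventually_atTop.1 hev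
  refine ⟨ε, hε, K + 1, fun k hk => ?_⟩
  obtain ⟨n, rfl⟩ : ∃ n, k = n + 1 := ⟨k - 1, by omega⟩
  have hr : 0 < r (n + 1) := hrpos _ (by omega)
  have han : ‖a (n + 1)‖ = r (n + 1) := ha _ (by omega)
  have hρ : (1 - 1 / ((n : ℝ) + 1)) * r (n + 1) = r (n + 1) - r (n + 1) / ((n : ℝ) + 1) := by
    ring
  have hδ : r (n + 1) / ((n : ℝ) + 1) ≤ r (n + 1) :=
    div_le_self hr.le (by linarith [n.cast_nonneg (α := ℝ)])
  have hδ₀ : 0 ≤ r (n + 1) / ((n : ℝ) + 1) := by positivity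
  push_cast
  refine ⟨fun z hz => ?_, fun z hz => ?_⟩ <;> rw [hf]
  · refine hK n (by omega) z hz.ge (by linarith) ?_
    linarith [norm_sub_norm_le (a (n + 1)) z, norm_sub_rev (a (n + 1)) z]
  · refine hK n (by omega) z ?_ ?_ hz.ge
    · linarith [norm_sub_norm_le (a (n + 1)) z, norm_sub_rev (a (n + 1)) z]
    · linarith [norm_le_norm_add_norm_sub' z (a (n + 1))]

/-- if `limsup k P_k < |C|/(2e)`, then there are `ε > 0` and `K` such
that for `k ≥ K`, `|f(z)| ≥ (1+ε) r_{k+1}` on the circles `|z| = (1 - 1/k) r_k`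
and `|z - a_k| = r_k / k`. -/
theorem stmt_11 (N : ℕ) (C : ℂ) (hC : C ≠ 0)
    (P r : ℕ → ℝ)
    (hP : ∀ k, 1 ≤ k → 0 < P k)
    (hPlim : Tendsto (fun k : ℕ => (P k) ^ ((1 : ℝ) / k)) atTop (nhds 1))
    (hrpos : ∀ k, 1 ≤ k → 0 < r k)
    (hr2 : ∀ᶠ k in atTop, 2 * r k ≤ r (k + 1))
    (hrec : ∀ k, 1 ≤ k →
      r (k + 1) = P k * (r k) ^ N * ∏ j ∈ Finset.Icc 1 k, (1 + r k / r j))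
    (a : ℕ → ℂ) (ha : ∀ k, 1 ≤ k → ‖a k‖ = r k)
    (f : ℂ → ℂ)
    (hmul : ∀ z : ℂ, Multipliable (fun k : ℕ => 1 - z / a (k + 1)))
    (hf : ∀ z : ℂ, f z = C * z ^ N * ∏' k : ℕ, (1 - z / a (k + 1)))
    (hsup : Filter.limsup (fun k : ℕ => (((k : ℝ) * P k : ℝ) : EReal)) atTop <
      ((‖C‖ / (2 * Real.exp 1) : ℝ) : EReal)) :
    ∃ ε : ℝ, 0 < ε ∧ ∃ K : ℕ, ∀ k, K ≤ k →
      (∀ z : ℂ, ‖z‖ = (1 - 1 / (k : ℝ)) * r k →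
        (1 + ε) * r (k + 1) ≤ ‖f z‖) ∧
      (∀ z : ℂ, ‖z - a k‖ = r k / (k : ℝ) →
        (1 + ε) * r (k + 1) ≤ ‖f z‖) :=
  stmt_11_general N C P r hP hPlim hrpos hr2 hrec a ha f hmul hf hsup
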